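/- arXiv:1904.08423 — 2 statements merged into one kernel-verified Lean document; each statement's English description precedes it below -/
import Mathlib

section
/- (One-dimensional weak minimum principle: boundary sign controls interior sign.) Let a < b be real numbers, let p, c : (a,b) → ℝ be continuous and bounded with c(x) ≥ 0 for all x ∈ (a,b), and let u : [a,b] → ℝ be continuous on [a,b] and twice continuously differentiable on (a,b) with −u″(x) + p(x) u′(x) + c(x) u(x) ≥ 0 for all x ∈ (a,b). If u(a) ≥ 0 and u(b) ≥ 0, then u(x) ≥ 0 for all x ∈ [a,b]. -/
/-!
For `ε > 0` put `v = u - ε e^{(M+1)(x-b)}`, where `M ≥ 0` bounds `|p|` and `c`. The exponential is a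
strict subsolution, so `-v'' + p v' + c v > 0` on `(a,b)`. Then `v` cannot attain a negative minimum
in the interior, since there `v' = 0`, `v'' ≥ 0` and `c v ≤ 0`. Hence `v ≥ min (v a) (v b) 0 ≥ -ε`
on `[a,b]`, and letting `ε → 0` gives `u ≥ 0`.
-/

open Set Filter Topology

noncomputable def ellipticOp (p c u : ℝ → ℝ) (x : ℝ) : ℝ :=
  -deriv (deriv u) x + p x * deriv u x + c x * u x

/-- If `f'' x < 0`, the second-derivative test makes `x` a local maximum as well, so `f` is locally
constant and `f'' x = 0`; no differentiability is needed since `deriv` is `0` where it does not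
exist. -/
theorem IsLocalMin.deriv_deriv_nonneg {f : ℝ → ℝ} {x : ℝ} (hmin : IsLocalMin f x)
    (hf : ContinuousAt f x) : 0 ≤ deriv (deriv f) x := by
  by_contra! hneg
  have hmax : IsLocalMax f x := isLocalMax_of_deriv_deriv_neg hneg hmin.deriv_eq_zero hf
  have hconst : f =ᶠ[𝓝 x] fun _ ↦ f x :=
    (hmin.and hmax).mono fun y hy ↦ le_antisymm hy.2 hy.1
  have hzero : deriv (deriv f) x = 0 := by
    rw [hconst.deriv.deriv_eq]
    simp
  exact hneg.ne hzero

theorem min_le_of_ellipticOp_pos {a b x : ℝ} {p c v : ℝ → ℝ} (hc : ∀ y ∈ Ioo a b, 0 ≤ c y)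
    (hv : ContinuousOn v (Icc a b)) (hLv : ∀ y ∈ Ioo a b, 0 < ellipticOp p c v y)
    (hx : x ∈ Icc a b) : min (min (v a) (v b)) 0 ≤ v x := by
  obtain ⟨x₀, hx₀, hmin⟩ := isCompact_Icc.exists_isMinOn ⟨x, hx⟩ hv
  refine le_trans ?_ (hmin hx)
  by_contra! hlt
  simp only [lt_min_iff] at hlt
  obtain ⟨⟨hlt_a, hlt_b⟩, hneg⟩ := hlt
  have hx₀_int : x₀ ∈ Ioo a b :=
    ⟨hx₀.1.lt_of_ne (by rintro rfl; exact hlt_a.false),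
      hx₀.2.lt_of_ne (by rintro rfl; exact hlt_b.false)⟩
  have hnhds : Icc a b ∈ 𝓝 x₀ := Icc_mem_nhds hx₀_int.1 hx₀_int.2
  have hloc : IsLocalMin v x₀ := hmin.isLocalMin hnhds
  have hsecond := hloc.deriv_deriv_nonneg (hv.continuousAt hnhds)
  have hLv₀ := hLv x₀ hx₀_int
  rw [ellipticOp, hloc.deriv_eq_zero] at hLv₀
  nlinarith [mul_nonpos_of_nonneg_of_nonpos (hc x₀ hx₀_int) hneg.le]

theorem ellipticOp_sub_const_mul {p c u w : ℝ → ℝ} {x : ℝ} (hu : ContDiffAt ℝ 2 u x)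
    (hw : ContDiffAt ℝ 2 w x) (ε : ℝ) :
    ellipticOp p c (fun y ↦ u y - ε * w y) x = ellipticOp p c u x - ε * ellipticOp p c w x := by
  have hderiv : deriv (fun y ↦ u y - ε * w y) =ᶠ[𝓝 x] fun y ↦ deriv u y - ε * deriv w y := by
    filter_upwards [hu.eventually (by simp), hw.eventually (by simp)] with y huy hwy
    exact ((huy.differentiableAt two_ne_zero).hasDerivAt.sub
      ((hwy.differentiableAt two_ne_zero).hasDerivAt.const_mul ε)).deriv
  have hu' := (hu.derivWithin (m := 1) (by norm_num)).differentiableAt one_ne_zero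
  have hw' := (hw.derivWithin (m := 1) (by norm_num)).differentiableAt one_ne_zero
  have hderiv' : HasDerivAt (fun y ↦ deriv u y - ε * deriv w y)
      (deriv (deriv u) x - ε * deriv (deriv w) x) x :=
    hu'.hasDerivAt.sub (hw'.hasDerivAt.const_mul ε)
  rw [ellipticOp, ellipticOp, ellipticOp, hderiv.deriv_eq, hderiv.eq_of_nhds, hderiv'.deriv]
  ring

theorem ellipticOp_exp_neg {p c : ℝ → ℝ} {M t x : ℝ} (hp : |p x| ≤ M) (hc : c x ≤ M) :
    ellipticOp p c (fun y ↦ Real.exp ((M + 1) * (y - t))) x < 0 := by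
  set α := M + 1
  have hderiv : ∀ y, HasDerivAt (fun y ↦ Real.exp (α * (y - t))) (α * Real.exp (α * (y - t))) y := by
    intro y
    simpa [mul_comm] using ((hasDerivAt_id y).sub_const t |>.const_mul α).exp
  have hderiv' : deriv (fun y ↦ Real.exp (α * (y - t))) = fun y ↦ α * Real.exp (α * (y - t)) :=
    funext fun y ↦ (hderiv y).deriv
  rw [ellipticOp, hderiv', ((hderiv x).const_mul α).deriv]
  have hE := Real.exp_pos (α * (x - t))
  have hM : 0 ≤ M := (abs_nonneg _).trans hp
  have hpα : p x * α ≤ M * α := mul_le_mul_of_nonneg_right ((le_abs_self _).trans hp) (by positivity)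
  nlinarith

theorem ellipticOp_sub_exp_pos {p c u : ℝ → ℝ} {M t x ε : ℝ} (hu : ContDiffAt ℝ 2 u x)
    (hLu : 0 ≤ ellipticOp p c u x) (hp : |p x| ≤ M) (hc : c x ≤ M) (hε : 0 < ε) :
    0 < ellipticOp p c (fun y ↦ u y - ε * Real.exp ((M + 1) * (y - t))) x := by
  rw [ellipticOp_sub_const_mul hu (by fun_prop)]
  nlinarith [mul_neg_of_pos_of_neg hε (ellipticOp_exp_neg (t := t) hp hc)]

theorem one_dim_weak_minimum_principle_general
    (a b : ℝ)
    (p c : ℝ → ℝ)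
    (hp_bdd : ∃ M, ∀ x ∈ Set.Ioo a b, |p x| ≤ M)
    (hc_bdd : ∃ M, ∀ x ∈ Set.Ioo a b, |c x| ≤ M)
    (hc_nonneg : ∀ x ∈ Set.Ioo a b, 0 ≤ c x)
    (u : ℝ → ℝ)
    (hu_cont : ContinuousOn u (Set.Icc a b))
    (hu_smooth : ContDiffOn ℝ 2 u (Set.Ioo a b))
    (hineq : ∀ x ∈ Set.Ioo a b, 0 ≤ -(deriv (deriv u) x) + p x * deriv u x + c x * u x)
    (hua : 0 ≤ u a) (hub : 0 ≤ u b) :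
    ∀ x ∈ Set.Icc a b, 0 ≤ u x := by
  intro x hx
  obtain ⟨Mp, hMp⟩ := hp_bdd
  obtain ⟨Mc, hMc⟩ := hc_bdd
  set M := max (max Mp Mc) 0
  set w : ℝ → ℝ := fun y ↦ Real.exp ((M + 1) * (y - b))
  have hw_le_one : ∀ y ≤ b, w y ≤ 1 := fun y hy ↦
    Real.exp_le_one_iff.2 <| mul_nonpos_of_nonneg_of_nonpos (by positivity) (sub_nonpos.2 hy)
  refine le_of_forall_pos_le_add fun ε hε ↦ ?_
  have hLv : ∀ y ∈ Ioo a b, 0 < ellipticOp p c (fun y ↦ u y - ε * w y) y := fun y hy ↦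
    ellipticOp_sub_exp_pos (hu_smooth.contDiffAt (isOpen_Ioo.mem_nhds hy)) (hineq y hy)
      ((hMp y hy).trans (le_max_of_le_left (le_max_left _ _)))
      ((le_abs_self _).trans ((hMc y hy).trans (le_max_of_le_left (le_max_right _ _)))) hε
  have hmin := min_le_of_ellipticOp_pos hc_nonneg (v := fun y ↦ u y - ε * w y)
    (hu_cont.sub (by fun_prop)) hLv hx
  have hwa := hw_le_one a (hx.1.trans hx.2)
  have hwb := hw_le_one b le_rfl
  have hwx : 0 < w x := Real.exp_pos _
  simp only [min_le_iff] at hmin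
  rcases hmin with (ha | hb) | h0 <;> nlinarith

/-- One-dimensional weak minimum principle: boundary sign controls interior sign.
If `-u'' + p u' + c u ≥ 0` on `(a,b)` with `p`, `c` continuous and bounded, `c ≥ 0`,
`u` continuous on `[a,b]` and `C²` on `(a,b)`, and `u(a), u(b) ≥ 0`,
then `u ≥ 0` on all of `[a,b]`. -/
theorem one_dim_weak_minimum_principle
    (a b : ℝ) (hab : a < b)
    (p c : ℝ → ℝ)
    (hp_cont : ContinuousOn p (Set.Ioo a b)) (hc_cont : ContinuousOn c (Set.Ioo a b))
    (hp_bdd : ∃ M, ∀ x ∈ Set.Ioo a b, |p x| ≤ M)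
    (hc_bdd : ∃ M, ∀ x ∈ Set.Ioo a b, |c x| ≤ M)
    (hc_nonneg : ∀ x ∈ Set.Ioo a b, 0 ≤ c x)
    (u : ℝ → ℝ)
    (hu_cont : ContinuousOn u (Set.Icc a b))
    (hu_smooth : ContDiffOn ℝ 2 u (Set.Ioo a b))
    (hineq : ∀ x ∈ Set.Ioo a b, 0 ≤ -(deriv (deriv u) x) + p x * deriv u x + c x * u x)
    (hua : 0 ≤ u a) (hub : 0 ≤ u b) :
    ∀ x ∈ Set.Icc a b, 0 ≤ u x :=
  one_dim_weak_minimum_principle_general a b p c hp_bdd hc_bdd hc_nonneg u hu_cont hu_smooth hineq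
    hua hub
end

section
/- (Positivity of the d = 4 Green's function.) For all χ > 0, 1 + cosh(χ) · ln(sinh(χ)/(1 + cosh(χ))) ≤ 0; equivalently, the function G(χ) = −(1/(2π)) · (1 + cosh(χ) · ln(sinh(χ)/(1 + cosh(χ)))) is nonnegative on (0,∞). -/
/-!
With `q = exp (-χ) ∈ (0, 1)` one has `sinh χ / (1 + cosh χ) = (1 - q) / (1 + q)` and
`2 q cosh χ = 1 + q² ≥ 1`. The claim is then `cosh χ · log ((1 + q) / (1 - q)) ≥ 1`, which follows
from `log ((1 + q) / (1 - q)) ≥ 2 q`, the first term of its power series with nonnegative terms.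
-/

open Real

theorem two_mul_le_log_one_add_sub_log_one_sub {x : ℝ} (hx₀ : 0 ≤ x) (hx₁ : x < 1) :
    2 * x ≤ log (1 + x) - log (1 - x) := by
  have hsum := hasSum_log_sub_log_of_abs_lt_one (abs_lt.mpr ⟨by linarith, hx₁⟩)
  simpa using le_hasSum hsum 0 fun k _ => by positivity

theorem sinh_div_one_add_cosh_eq (χ : ℝ) :
    sinh χ / (1 + cosh χ) = (1 - exp (-χ)) / (1 + exp (-χ)) := by
  have hexp : exp χ * exp (-χ) = 1 := by rw [← exp_add, add_neg_cancel, exp_zero]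
  rw [sinh_eq, cosh_eq, div_eq_div_iff (by positivity) (by positivity)]
  linear_combination hexp

theorem one_le_two_mul_exp_neg_mul_cosh (χ : ℝ) : 1 ≤ 2 * exp (-χ) * cosh χ := by
  have hexp : exp (-χ) * exp χ = 1 := by rw [← exp_add, neg_add_cancel, exp_zero]
  rw [cosh_eq]
  nlinarith [sq_nonneg (exp (-χ))]

theorem one_add_cosh_mul_log_sinh_div_one_add_cosh_nonpos {χ : ℝ} (hχ : 0 < χ) :
    1 + cosh χ * log (sinh χ / (1 + cosh χ)) ≤ 0 := by
  set q := exp (-χ) with hq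
  have hq₀ : 0 < q := exp_pos _
  have hq₁ : q < 1 := exp_lt_one_iff.mpr (neg_lt_zero.mpr hχ)
  have hlog : log (sinh χ / (1 + cosh χ)) ≤ -(2 * q) := by
    rw [sinh_div_one_add_cosh_eq, ← hq, log_div (by linarith) (by linarith)]
    linarith [two_mul_le_log_one_add_sub_log_one_sub hq₀.le hq₁]
  calc 1 + cosh χ * log (sinh χ / (1 + cosh χ))
      ≤ 1 + cosh χ * -(2 * q) := by gcongr
    _ = 1 - 2 * q * cosh χ := by ring
    _ ≤ 0 := by linarith [one_le_two_mul_exp_neg_mul_cosh χ]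

/-- Positivity of the `d = 4` Green's function on the Rindler horizon: for all `χ > 0`,
`1 + cosh χ · ln(sinh χ / (1 + cosh χ)) ≤ 0`; equivalently
`G(χ) = -(1/2π)(1 + cosh χ · ln(sinh χ / (1 + cosh χ)))` is nonnegative on `(0,∞)`. -/
theorem greens_function_d4_nonneg :
    ∀ χ : ℝ, 0 < χ →
      1 + Real.cosh χ * Real.log (Real.sinh χ / (1 + Real.cosh χ)) ≤ 0 ∧
      0 ≤ -(1 / (2 * π)) *
        (1 + Real.cosh χ * Real.log (Real.sinh χ / (1 + Real.cosh χ))) := by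
  intro χ hχ
  have h := one_add_cosh_mul_log_sinh_div_one_add_cosh_nonpos hχ
  exact ⟨h, mul_nonneg_of_nonpos_of_nonpos (neg_nonpos.mpr (by positivity)) h⟩
end
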